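/- Let a ∈ (0,1) and x > 0, and define S_a(n,l) by the recursion in the context. Then for every integer l ≥ 1, lim_{n→∞} x^l · S_a(n,l) / ( ∑_{ℓ=0}^{n} x^ℓ · S_a(n,ℓ) ) = e^{−x/a} · (x/a)^{l−1} / (l−1)!. -/

import Mathlib

open Real Finset Filter

/-- The numbers `S_a(n,l)` (generalized Stirling numbers up to the factor `a^{-l}`),
defined by `S_a(0,0) = 1`, `S_a(n,0) = 0` for `n ≥ 1`, `S_a(n,n) = 1`, and
`S_a(n+1,l) = (n − a·l)·S_a(n,l) + S_a(n,l−1)` for `1 ≤ l ≤ n` (and `S_a(n,l) = 0`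
for `l > n`). -/
noncomputable def Sgen (a : ℝ) : ℕ → ℕ → ℝ
  | 0, 0 => 1
  | 0, _ + 1 => 0
  | _ + 1, 0 => 0
  | n + 1, l + 1 => ((n : ℝ) - a * (l + 1)) * Sgen a n (l + 1) + Sgen a n l

/-!
Normalise by `S_a(n,1) = ∏_{0<i<n} (i - a)`. Solving the recursion gives
`a^l l! S_a(n,l) = ∑_j (-1)^j C(l,j) ∏_{i<n} (i - j a)`, and since
`∏_{i<n} (i - b) / ∏_{i<n} (i - a) → 0` for `b > a`, only the terms `j = 0, 1` survive:
`S_a(n,l+1) / S_a(n,1) → 1 / (a^l l!)`. An induction on `n` bounds this ratio by `c^l / l!`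
uniformly in `n`, so by Tannery's theorem `∑_l x^l S_a(n,l+1) / S_a(n,1) → e^{x/a}`, and the
`l`-th term divided by this sum tends to the Poisson weight `e^{-x/a} (x/a)^l / l!`.
-/

open Topology
open scoped Nat

lemma cast_choose_succ_mul_sub {l j : ℕ} (h : j ≤ l + 1) :
    ((l + 1).choose j : ℝ) * ((l : ℝ) + 1 - j) = (l + 1) * l.choose j := by
  rw [← Nat.cast_succ, ← Nat.cast_sub h, mul_comm _ (l.choose j : ℝ)]
  exact_mod_cast (Nat.choose_mul_succ_eq l j).symm

lemma sum_range_neg_one_pow_mul_choose (l : ℕ) :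
    ∑ j ∈ range (l + 1), (-1 : ℝ) ^ j * l.choose j = if l = 0 then 1 else 0 := by
  exact_mod_cast Int.alternating_sum_range_choose

lemma prod_range_natCast_eq_zero {n : ℕ} (hn : 1 ≤ n) : ∏ i ∈ range n, (i : ℝ) = 0 :=
  prod_eq_zero (mem_range.mpr hn) Nat.cast_zero

lemma prod_range_sub_ne_zero {a : ℝ} (ha : a ∈ Set.Ioo (0 : ℝ) 1) (n : ℕ) :
    ∏ i ∈ range n, ((i : ℝ) - a) ≠ 0 := by
  refine prod_ne_zero_iff.mpr fun i _ => sub_ne_zero.mpr ?_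
  rcases i with _ | i
  · exact_mod_cast ha.1.ne
  · push_cast; linarith [ha.2, (i.cast_nonneg : (0 : ℝ) ≤ i)]

lemma tendsto_prod_range_zero_of_le_one_sub {u ε : ℕ → ℝ} (hu : ∀ i, 0 ≤ u i)
    (huε : ∀ i, u i ≤ 1 - ε i) (hε : ∀ i, 0 ≤ ε i) (hε' : ¬Summable ε) :
    Tendsto (fun n => ∏ i ∈ range n, u i) atTop (𝓝 0) := by
  have hsum := (not_summable_iff_tendsto_nat_atTop_of_nonneg hε).mp hε'
  refine squeeze_zero (fun n => prod_nonneg fun i _ => hu i) (fun n => ?_)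
    (tendsto_exp_atBot.comp (tendsto_neg_atTop_atBot.comp hsum))
  calc ∏ i ∈ range n, u i ≤ ∏ i ∈ range n, exp (-ε i) :=
        prod_le_prod (fun i _ => hu i) fun i _ => (huε i).trans (one_sub_le_exp_neg _)
    _ = exp (-∑ i ∈ range n, ε i) := by rw [← exp_sum, sum_neg_distrib]

/-- The ratio behaves like `n ^ (a - b)`; it suffices that the harmonic series diverges, since
`(i - b) / (i - a) ≤ 1 - (b - a) / i ≤ exp (-(b - a) / i)` for `i > b`. -/
lemma tendsto_prod_sub_div_prod_sub {a b : ℝ} (ha : 0 ≤ a) (hab : a < b) :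
    Tendsto (fun n => (∏ i ∈ range n, ((i : ℝ) - b)) / ∏ i ∈ range n, ((i : ℝ) - a))
      atTop (𝓝 0) := by
  obtain ⟨m, hm⟩ := exists_nat_gt b
  set u : ℕ → ℝ := fun i => (((i + m : ℕ) : ℝ) - b) / (((i + m : ℕ) : ℝ) - a)
  set ε : ℕ → ℝ := fun i => (b - a) * (1 / ((i + m : ℕ) : ℝ))
  have hm_le (i : ℕ) : (m : ℝ) ≤ ((i + m : ℕ) : ℝ) := by exact_mod_cast le_add_self
  have hu (i : ℕ) : 0 ≤ u i := div_nonneg (by linarith [hm_le i]) (by linarith [hm_le i])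
  have huε (i : ℕ) : u i ≤ 1 - ε i := by
    have h0 : 0 < ((i + m : ℕ) : ℝ) - a := by linarith [hm_le i]
    have : u i = 1 - (b - a) / (((i + m : ℕ) : ℝ) - a) := by
      simp only [u]; field_simp; ring
    rw [this, sub_le_sub_iff_left, show ε i = (b - a) / ((i + m : ℕ) : ℝ) from mul_one_div _ _]
    exact div_le_div_of_nonneg_left (by linarith) h0 (by linarith)
  have hε (i : ℕ) : 0 ≤ ε i := mul_nonneg (by linarith) (by positivity)
  have hε' : ¬Summable ε := by
    rw [summable_mul_left_iff (by linarith), summable_nat_add_iff m (f := fun i => 1 / (i : ℝ))]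
    exact Real.not_summable_one_div_natCast
  have hsplit (k : ℕ) :
      (∏ i ∈ range (k + m), ((i : ℝ) - b)) / ∏ i ∈ range (k + m), ((i : ℝ) - a) =
        (∏ i ∈ range m, ((i : ℝ) - b)) / (∏ i ∈ range m, ((i : ℝ) - a)) *
          ∏ i ∈ range k, u i := by
    simp only [u, add_comm k m, prod_range_add, mul_div_mul_comm, ← prod_div_distrib,
      add_comm _ m]
  rw [← tendsto_add_atTop_iff_nat m]
  simp_rw [hsplit]
  simpa using (tendsto_prod_range_zero_of_le_one_sub hu huε hε hε').const_mul
    ((∏ i ∈ range m, ((i : ℝ) - b)) / ∏ i ∈ range m, ((i : ℝ) - a))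

lemma tendsto_prod_sub_nat_mul_div_prod_sub {a : ℝ} (ha : a ∈ Set.Ioo (0 : ℝ) 1) (j : ℕ) :
    Tendsto (fun n => (∏ i ∈ range n, ((i : ℝ) - j * a)) / ∏ i ∈ range n, ((i : ℝ) - a))
      atTop (𝓝 (if j = 1 then 1 else 0)) := by
  rcases j with _ | _ | j
  · refine tendsto_const_nhds.congr' ?_
    filter_upwards [eventually_ge_atTop 1] with n hn
    simp [prod_range_natCast_eq_zero hn]
  · simp [div_self (prod_range_sub_ne_zero ha _)]
  · simp only [add_eq_right, add_eq_zero, one_ne_zero, and_false, if_false]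
    refine tendsto_prod_sub_div_prod_sub ha.1.le ?_
    push_cast
    nlinarith [ha.1, (j.cast_nonneg : (0 : ℝ) ≤ j)]

lemma Sgen_succ_succ (a : ℝ) (n l : ℕ) :
    Sgen a (n + 1) (l + 1) = ((n : ℝ) - a * (l + 1)) * Sgen a n (l + 1) + Sgen a n l := rfl

lemma Sgen_eq_zero_of_lt (a : ℝ) {n l : ℕ} (h : n < l) : Sgen a n l = 0 := by
  induction n generalizing l with
  | zero => obtain ⟨l, rfl⟩ := Nat.exists_add_one_eq.mpr h; rfl
  | succ n ih =>
    obtain ⟨l, rfl⟩ := Nat.exists_add_one_eq.mpr (Nat.zero_lt_of_lt h)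
    rw [Sgen_succ_succ, ih (by omega), ih (by omega), mul_zero, add_zero]

lemma Sgen_succ_one (a : ℝ) {n : ℕ} (hn : 1 ≤ n) :
    Sgen a (n + 1) 1 = ((n : ℝ) - a) * Sgen a n 1 := by
  obtain ⟨n, rfl⟩ := Nat.exists_add_one_eq.mpr hn
  simp [Sgen]

lemma Sgen_one_pos {a : ℝ} (ha : a < 1) {n : ℕ} (hn : 1 ≤ n) : 0 < Sgen a n 1 := by
  induction n, hn using Nat.le_induction with
  | base => simp [Sgen]
  | succ n hn ih =>
    have : (1 : ℝ) ≤ n := by exact_mod_cast hn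
    rw [Sgen_succ_one a hn]
    exact mul_pos (by linarith) ih

lemma Sgen_nonneg {a : ℝ} (ha : a < 1) (n l : ℕ) : 0 ≤ Sgen a n l := by
  induction n generalizing l with
  | zero => cases l <;> simp [Sgen]
  | succ n ih =>
    rcases l with _ | l
    · exact le_rfl
    rw [Sgen_succ_succ]
    rcases lt_or_ge n (l + 1) with h | h
    · rw [Sgen_eq_zero_of_lt a h, mul_zero, zero_add]
      exact ih l
    · have : (l : ℝ) + 1 ≤ n := by exact_mod_cast h
      exact add_nonneg (mul_nonneg (by nlinarith) (ih _)) (ih _)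

lemma Sgen_mul_pow_mul_factorial (a : ℝ) (n l : ℕ) :
    Sgen a n l * (a ^ l * l !) =
      ∑ j ∈ range (l + 1), (-1) ^ j * (l.choose j : ℝ) *
        ∏ i ∈ range n, ((i : ℝ) - j * a) := by
  induction n generalizing l with
  | zero =>
    simp only [prod_range_zero, mul_one, sum_range_neg_one_pow_mul_choose]
    rcases l with _ | l <;> simp [Sgen]
  | succ n ih =>
    rcases l with _ | l
    · simp [Sgen, prod_range_succ']
    have hlast : ∑ j ∈ range (l + 1), (-1) ^ j * (l.choose j : ℝ) *
          ∏ i ∈ range n, ((i : ℝ) - j * a)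
        = ∑ j ∈ range (l + 2), (-1) ^ j * (l.choose j : ℝ) *
            ∏ i ∈ range n, ((i : ℝ) - j * a) := by
      simp [sum_range_succ _ (l + 1)]
    calc Sgen a (n + 1) (l + 1) * (a ^ (l + 1) * (l + 1)!)
        = ((n : ℝ) - a * (l + 1)) * (Sgen a n (l + 1) * (a ^ (l + 1) * (l + 1)!))
          + a * (l + 1) * (Sgen a n l * (a ^ l * l !)) := by
          rw [Sgen_succ_succ, Nat.factorial_succ]; push_cast; ring
      _ = ∑ j ∈ range (l + 2), (-1) ^ j * ((l + 1).choose j : ℝ) *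
            ((∏ i ∈ range n, ((i : ℝ) - j * a)) * (n - j * a)) := by
          rw [ih, ih, hlast, mul_sum, mul_sum, ← sum_add_distrib]
          refine sum_congr rfl fun j hj => ?_
          have := cast_choose_succ_mul_sub (mem_range_succ_iff.mp hj)
          linear_combination -(-1) ^ j * a * (∏ i ∈ range n, ((i : ℝ) - j * a)) * this
      _ = _ := by simp only [prod_range_succ]

lemma Sgen_one_mul_eq_neg_prod {a : ℝ} {n : ℕ} (hn : 1 ≤ n) :
    Sgen a n 1 * a = -∏ i ∈ range n, ((i : ℝ) - a) := by
  simpa [sum_range_succ, prod_range_natCast_eq_zero hn] using Sgen_mul_pow_mul_factorial a n 1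

lemma tendsto_Sgen_div_Sgen_one {a : ℝ} (ha : a ∈ Set.Ioo (0 : ℝ) 1) (l : ℕ) :
    Tendsto (fun n => Sgen a n (l + 1) / Sgen a n 1) atTop (𝓝 (a ^ l * l !)⁻¹) := by
  set P : ℕ → ℝ → ℝ := fun n y => ∏ i ∈ range n, ((i : ℝ) - y)
  have hlim : Tendsto (fun n => -(∑ j ∈ range (l + 2), (-1) ^ j * ((l + 1).choose j : ℝ) *
      (P n (j * a) / P n a)) / (a ^ l * (l + 1)!)) atTop (𝓝 (a ^ l * l !)⁻¹) := by
    convert ((tendsto_finsetSum _ fun j _ =>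
      (tendsto_prod_sub_nat_mul_div_prod_sub ha j).const_mul
        ((-1) ^ j * ((l + 1).choose j : ℝ))).neg).div_const (a ^ l * (l + 1)!) using 2
    field_simp
    simp [mul_ite, sum_ite_eq', Nat.factorial_succ]
    ring
  refine hlim.congr' ?_
  filter_upwards [eventually_ge_atTop 1] with n hn
  have ha0 : a ≠ 0 := ha.1.ne'
  have hP : P n a ≠ 0 := prod_range_sub_ne_zero ha n
  have hS : Sgen a n 1 ≠ 0 := (Sgen_one_pos ha.2 hn).ne'
  simp only [mul_div_assoc', ← sum_div]
  rw [← Sgen_mul_pow_mul_factorial,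
    show P n a = -(Sgen a n 1 * a) by simp [P, Sgen_one_mul_eq_neg_prod hn]]
  field_simp
  ring

/-- `a c ≥ 1` drives the generic step, `(1 - a) c ≥ 1` the diagonal one `j + 1 = n`. -/
lemma Sgen_le_Sgen_one_mul_pow_div_factorial {a c : ℝ} (ha : a < 1) (hac : 1 ≤ a * c)
    (hac' : 1 ≤ (1 - a) * c) {n : ℕ} (hn : 1 ≤ n) (j : ℕ) :
    Sgen a n (j + 1) ≤ Sgen a n 1 * c ^ j / j ! := by
  have hc : 0 < c := pos_of_mul_pos_right (one_pos.trans_le hac') (by linarith)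
  induction n, hn using Nat.le_induction generalizing j with
  | base =>
    rcases j with _ | j
    · simp
    · rw [Sgen_eq_zero_of_lt a (by omega)]
      have : Sgen a 1 1 = 1 := by simp [Sgen]
      positivity
  | succ n hn ih =>
    rcases j with _ | j
    · simp
    set B := Sgen a n 1 * c ^ j / (j !)
    set T := Sgen a n 1 * c ^ (j + 1) / ((j + 1)!)
    have hS := (Sgen_one_pos ha hn).le
    have hB : 0 ≤ B := by positivity
    have hT : 0 ≤ T := by positivity
    have hBT : B * c = (j + 1) * T := by
      simp only [B, T, Nat.factorial_succ]; push_cast; field_simp; ring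
    have hRHS : Sgen a (n + 1) 1 * c ^ (j + 1) / ((j + 1)!) = (n - a) * T := by
      rw [Sgen_succ_one a hn]; ring
    rw [hRHS, Sgen_succ_succ]
    push_cast
    rcases lt_trichotomy (j + 1) n with h | rfl | h
    · have hcoef : 0 ≤ (n : ℝ) - a * (j + 1 + 1) := by
        have : (j : ℝ) + 1 + 1 ≤ n := by exact_mod_cast h
        nlinarith
      calc ((n : ℝ) - a * (j + 1 + 1)) * Sgen a n (j + 1 + 1) + Sgen a n (j + 1)
          ≤ ((n : ℝ) - a * (j + 1 + 1)) * T + B :=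
            add_le_add (mul_le_mul_of_nonneg_left (ih (j + 1)) hcoef) (ih j)
        _ ≤ (n - a) * T := by nlinarith [mul_le_mul_of_nonneg_left hac hB]
    · rw [Sgen_eq_zero_of_lt a (by omega), mul_zero, zero_add]
      refine (ih j).trans (le_of_mul_le_mul_left ?_ (by positivity : (0 : ℝ) < j + 1))
      have hjc : (j : ℝ) + 1 ≤ (j + 1 - a) * c := by
        nlinarith [(j.cast_nonneg : (0 : ℝ) ≤ j)]
      push_cast
      nlinarith [mul_le_mul_of_nonneg_right hjc hB]
    · rw [Sgen_eq_zero_of_lt a (by omega), Sgen_eq_zero_of_lt a h, mul_zero, zero_add]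
      have : (1 : ℝ) ≤ n := by exact_mod_cast hn
      exact mul_nonneg (by linarith) hT

lemma exists_Sgen_le_Sgen_one_mul_pow_div_factorial {a : ℝ} (ha : a ∈ Set.Ioo (0 : ℝ) 1) :
    ∃ c, ∀ n, 1 ≤ n → ∀ j, Sgen a n (j + 1) ≤ Sgen a n 1 * c ^ j / j ! := by
  have ha1 : 0 < 1 - a := sub_pos.mpr ha.2
  refine ⟨a⁻¹ + (1 - a)⁻¹, fun n hn =>
    Sgen_le_Sgen_one_mul_pow_div_factorial ha.2 ?_ ?_ hn⟩
  · rw [mul_add, mul_inv_cancel₀ ha.1.ne', le_add_iff_nonneg_right]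
    exact mul_nonneg ha.1.le (inv_nonneg.mpr ha1.le)
  · rw [mul_add, mul_inv_cancel₀ ha1.ne', le_add_iff_nonneg_left]
    exact mul_nonneg ha1.le (inv_nonneg.mpr ha.1.le)

lemma sum_range_pow_mul_Sgen (a x : ℝ) {n : ℕ} (hn : 1 ≤ n) :
    ∑ j ∈ range (n + 1), x ^ j * Sgen a n j = x * ∑' k, x ^ k * Sgen a n (k + 1) := by
  obtain ⟨m, rfl⟩ := Nat.exists_add_one_eq.mpr hn
  rw [tsum_eq_sum (s := range (m + 1)) fun k hk => by
      rw [Sgen_eq_zero_of_lt a (by simpa using hk), mul_zero],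
    mul_sum, sum_range_succ']
  simp [Sgen, pow_succ, mul_assoc, mul_comm x]

/-- **Table 1, first row (number of clusters, `a ∈ (0,1)`)**: for each `l ≥ 1`,
`x^l S_a(n,l) / ∑_{ℓ=0}^n x^ℓ S_a(n,ℓ) → e^{−x/a} (x/a)^{l−1}/(l−1)!` as `n → ∞`. -/
theorem cluster_number_limit_pos_discount (a x : ℝ)
    (ha : a ∈ Set.Ioo (0 : ℝ) 1) (hx : 0 < x) (l : ℕ) (hl : 1 ≤ l) :
    Tendsto (fun n : ℕ =>
        x ^ l * Sgen a n l / ∑ j ∈ Finset.range (n + 1), x ^ j * Sgen a n j)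
      atTop
      (nhds (Real.exp (-(x / a)) * (x / a) ^ (l - 1) / (Nat.factorial (l - 1) : ℝ))) := by
  obtain ⟨k, rfl⟩ := Nat.exists_add_one_eq.mpr hl
  obtain ⟨c, hc⟩ := exists_Sgen_le_Sgen_one_mul_pow_div_factorial ha
  set F : ℕ → ℕ → ℝ := fun n j => x ^ j * (Sgen a n (j + 1) / Sgen a n 1)
  have hF (j : ℕ) : Tendsto (F · j) atTop (𝓝 ((x / a) ^ j / j !)) := by
    convert (tendsto_Sgen_div_Sgen_one ha j).const_mul (x ^ j) using 2
    rw [div_pow]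
    field_simp
  have hbound : ∀ᶠ n in atTop, ∀ j, ‖F n j‖ ≤ (x * c) ^ j / j ! := by
    filter_upwards [eventually_ge_atTop 1] with n hn j
    have hS := Sgen_one_pos ha.2 hn
    have := Sgen_nonneg ha.2 n (j + 1)
    rw [norm_of_nonneg (by positivity), mul_pow, mul_div_assoc]
    refine mul_le_mul_of_nonneg_left ?_ (by positivity)
    rw [div_le_iff₀ hS]
    exact (hc n hn j).trans_eq (by ring)
  have hsum : Tendsto (fun n => ∑' j, F n j) atTop (𝓝 (exp (x / a))) := by
    rw [Real.exp_eq_exp_ℝ, ← (NormedSpace.expSeries_div_hasSum_exp (x / a)).tsum_eq]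
    exact tendsto_tsum_of_dominated_convergence (Real.summable_pow_div_factorial _) hF hbound
  have hratio : (fun n => F n k / ∑' j, F n j) =ᶠ[atTop]
      fun n => x ^ (k + 1) * Sgen a n (k + 1) / ∑ j ∈ range (n + 1), x ^ j * Sgen a n j := by
    filter_upwards [eventually_ge_atTop 1] with n hn
    have hS := (Sgen_one_pos ha.2 hn).ne'
    simp only [F, mul_div_assoc', tsum_div_const, sum_range_pow_mul_Sgen a x hn]
    field_simp
    ring
  convert ((hF k).div hsum (exp_pos _).ne').congr' hratio using 2
  rw [Nat.add_sub_cancel, exp_neg]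
  ring
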